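/- arXiv:2407.19217 — 6 statements merged into one kernel-verified Lean document; each statement's English description precedes it below -/
import Mathlib

section
/- Let $n, m \ge 1$, let $K$ be a real $n\times n$ matrix, $\omega \in \mathbb{R}^n$, and $N_b$ a real $n\times m$ matrix. Suppose the $(n+1)\times(n+1)$ block matrix $K_e = \begin{pmatrix} K & \omega \\ \omega^T & 0 \end{pmatrix}$ is invertible. Define the $(n+1)\times(m+1)$ block matrices $Z_e = \begin{pmatrix} 0 & \omega \\ 0 & 0 \end{pmatrix}$ (with top-left block the $n\times m$ zero matrix and top-right column $\omega$) and $N_{be} = \begin{pmatrix} N_b & 0 \\ 0 & 0 \end{pmatrix}$. Then $Z_e^T K_e^{-1} N_{be} = 0$ (the $(m+1)\times(m+1)$ zero matrix). -/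
/-!
`Zₑᵀ = E Kₑ` for the row selector `E = (0 0; 0 1)`, since the last block row of `Kₑ` is `(ωᵀ 0)`.
Hence `Zₑᵀ Kₑ⁻¹ N_be = E N_be`, which vanishes because `N_be` has zero last block row.
-/

open Matrix

theorem transpose_fromBlocks_zero_replicateCol_eq_mul {m n ι R : Type*} [Fintype n] [Fintype ι]
    [DecidableEq ι] [Semiring R] (K : Matrix n n R) (ω : n → R) :
    (fromBlocks (0 : Matrix n m R) (replicateCol ι ω) 0 0)ᵀ =
      fromBlocks (0 : Matrix m n R) 0 0 (1 : Matrix ι ι R) *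
        fromBlocks K (replicateCol ι ω) (replicateRow ι ω) 0 := by
  simp [fromBlocks_transpose, transpose_replicateCol, fromBlocks_multiply]

theorem fromBlocks_zero_one_mul_fromBlocks_zero {l m n ι R : Type*} [Fintype n] [Fintype ι]
    [DecidableEq ι] [Semiring R] (N : Matrix n l R) :
    fromBlocks (0 : Matrix m n R) 0 0 (1 : Matrix ι ι R) *
      fromBlocks N 0 0 (0 : Matrix ι ι R) = 0 := by
  simp [fromBlocks_multiply]

theorem stmt_2_general (n m : ℕ)
    (K : Matrix (Fin n) (Fin n) ℝ) (ω : Fin n → ℝ)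
    (Nb : Matrix (Fin n) (Fin m) ℝ)
    (Ke : Matrix (Fin n ⊕ Fin 1) (Fin n ⊕ Fin 1) ℝ)
    (hKe : Ke = Matrix.fromBlocks K (Matrix.replicateCol (Fin 1) ω) (Matrix.replicateRow (Fin 1) ω) 0)
    (hKeInv : IsUnit Ke)
    (Ze Nbe : Matrix (Fin n ⊕ Fin 1) (Fin m ⊕ Fin 1) ℝ)
    (hZe : Ze = Matrix.fromBlocks 0 (Matrix.replicateCol (Fin 1) ω) 0 0)
    (hNbe : Nbe = Matrix.fromBlocks Nb 0 0 0) :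
    Zeᵀ * Ke⁻¹ * Nbe = 0 := by
  have hdet : IsUnit Ke.det := (isUnit_iff_isUnit_det Ke).mp hKeInv
  rw [hZe, transpose_fromBlocks_zero_replicateCol_eq_mul K, ← hKe,
    mul_nonsing_inv_cancel_right _ _ hdet, hNbe, fromBlocks_zero_one_mul_fromBlocks_zero]

theorem stmt_2 (n m : ℕ) (hn : 1 ≤ n) (hm : 1 ≤ m)
    (K : Matrix (Fin n) (Fin n) ℝ) (ω : Fin n → ℝ)
    (Nb : Matrix (Fin n) (Fin m) ℝ)
    (Ke : Matrix (Fin n ⊕ Fin 1) (Fin n ⊕ Fin 1) ℝ)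
    (hKe : Ke = Matrix.fromBlocks K (Matrix.replicateCol (Fin 1) ω) (Matrix.replicateRow (Fin 1) ω) 0)
    (hKeInv : IsUnit Ke)
    (Ze Nbe : Matrix (Fin n ⊕ Fin 1) (Fin m ⊕ Fin 1) ℝ)
    (hZe : Ze = Matrix.fromBlocks 0 (Matrix.replicateCol (Fin 1) ω) 0 0)
    (hNbe : Nbe = Matrix.fromBlocks Nb 0 0 0) :
    Zeᵀ * Ke⁻¹ * Nbe = 0 :=
  stmt_2_general n m K ω Nb Ke hKe hKeInv Ze Nbe hZe hNbe
end

section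
/- Let $A$ be an invertible real $k\times k$ matrix, $B$ a real $k\times l$ matrix, $C$ a real $l\times k$ matrix, and $D$ a real $l\times l$ matrix, and suppose the Schur complement $S = D - CA^{-1}B$ is invertible. Set $\mathcal{A} = \begin{pmatrix} A & B \\ C & D \end{pmatrix}$ and $\mathcal{P}_2 = \begin{pmatrix} A & B \\ 0 & S \end{pmatrix}$. Then $\mathcal{P}_2$ is invertible and $(\mathcal{P}_2^{-1}\mathcal{A} - I)^2 = 0$; that is, the preconditioned matrix $\mathcal{P}_2^{-1}\mathcal{A}$ satisfies the polynomial $p_2(t) = (t-1)^2$. -/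
/-!
Block Gaussian elimination factors `𝒜 = L * P₂` with `L = [[1, 0], [C A⁻¹, 1]]`, so
`P₂⁻¹ 𝒜` is conjugate to `L`. Since `L - 1` is strictly block lower triangular,
`(L - 1)² = 0`, and this identity survives conjugation by `P₂`.
-/

open Matrix

namespace Matrix

variable {m n α : Type*} [Fintype m] [Fintype n] [DecidableEq m] [DecidableEq n] [CommRing α]

theorem fromBlocks_eq_fromBlocks_one_mul_fromBlocks_zero₂₁ {A : Matrix m m α} (hA : IsUnit A)
    (B : Matrix m n α) (C : Matrix n m α) (D : Matrix n n α) :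
    fromBlocks A B C D = fromBlocks 1 0 (C * A⁻¹) 1 * fromBlocks A B 0 (D - C * A⁻¹ * B) := by
  have hAd : IsUnit A.det := (isUnit_iff_isUnit_det A).mp hA
  simp [fromBlocks_multiply, Matrix.mul_assoc, nonsing_inv_mul A hAd]

theorem sq_fromBlocks_one_zero_sub_one (X : Matrix n m α) :
    (fromBlocks 1 0 X 1 - 1 : Matrix (m ⊕ n) (m ⊕ n) α) ^ 2 = 0 := by
  rw [← fromBlocks_one, sub_eq_add_neg, fromBlocks_neg, fromBlocks_add, sq, fromBlocks_multiply]
  simp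

theorem sq_inv_mul_mul_sub_one {P : Matrix n n α} (hP : IsUnit P) (M : Matrix n n α) :
    (P⁻¹ * M * P - 1) ^ 2 = P⁻¹ * (M - 1) ^ 2 * P := by
  have hPd : IsUnit P.det := (isUnit_iff_isUnit_det P).mp hP
  have hconj : P⁻¹ * M * P - 1 = P⁻¹ * (M - 1) * P := by
    rw [Matrix.mul_sub, Matrix.sub_mul, Matrix.mul_one, nonsing_inv_mul P hPd]
  rw [hconj, sq, sq]
  simp only [Matrix.mul_assoc, mul_nonsing_inv_cancel_left P _ hPd]

end Matrix

theorem stmt_5 (k l : ℕ)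
    (A : Matrix (Fin k) (Fin k) ℝ) (hA : IsUnit A)
    (B : Matrix (Fin k) (Fin l) ℝ) (C : Matrix (Fin l) (Fin k) ℝ)
    (D : Matrix (Fin l) (Fin l) ℝ)
    (S : Matrix (Fin l) (Fin l) ℝ) (hSdef : S = D - C * A⁻¹ * B) (hS : IsUnit S)
    (calA P2 : Matrix (Fin k ⊕ Fin l) (Fin k ⊕ Fin l) ℝ)
    (hcalA : calA = Matrix.fromBlocks A B C D)
    (hP2 : P2 = Matrix.fromBlocks A B 0 S) :
    IsUnit P2 ∧ (P2⁻¹ * calA - 1) ^ 2 = 0 := by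
  have hP2unit : IsUnit P2 := hP2 ▸ isUnit_fromBlocks_zero₂₁.mpr ⟨hA, hS⟩
  have hfactor : calA = fromBlocks 1 0 (C * A⁻¹) 1 * P2 := by
    rw [hcalA, hP2, hSdef, fromBlocks_eq_fromBlocks_one_mul_fromBlocks_zero₂₁ hA]
  refine ⟨hP2unit, ?_⟩
  rw [hfactor, ← Matrix.mul_assoc, sq_inv_mul_mul_sub_one hP2unit,
    sq_fromBlocks_one_zero_sub_one, Matrix.mul_zero, Matrix.zero_mul]
end

section
/- Let $A$ be an invertible real $k\times k$ matrix and $B$ a real $k\times l$ matrix such that $S_0 := B^T A^{-1} B$ is invertible. Set the saddle point matrix $\mathcal{A} = \begin{pmatrix} A & B \\ B^T & 0 \end{pmatrix}$ and the block diagonal preconditioner $\mathcal{P}_1 = \begin{pmatrix} A & 0 \\ 0 & S_0 \end{pmatrix}$. Then $\mathcal{P}_1$ is invertible and the preconditioned matrix $T = \mathcal{P}_1^{-1}\mathcal{A}$ satisfies $T\,(T - I)\,(T^2 - T - I) = 0$; that is, $T$ is annihilated by the polynomial $p_1(t) = t(t-1)(t^2 - t - 1)$. -/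
/-!
Write `T = P₁⁻¹ 𝒜 = [[1, X], [Y, 0]]` with `X = A⁻¹ B` and `Y = S₀⁻¹ Bᵀ`, so that `Y X = 1`.
Then `X Y` is idempotent, `T (T - 1) = T² - T = diag(X Y, 1)` and `T² - T - 1 = diag(X Y - 1, 0)`,
whose product `diag(X Y (X Y - 1), 0)` vanishes.
-/

open Matrix

namespace Matrix

variable {m n R : Type*}

lemma fromBlocks_sub {l o α : Type*} [Sub α] (A : Matrix m l α) (B : Matrix m o α)
    (C : Matrix n l α) (D : Matrix n o α) (A' : Matrix m l α) (B' : Matrix m o α)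
    (C' : Matrix n l α) (D' : Matrix n o α) :
    fromBlocks A B C D - fromBlocks A' B' C' D' = fromBlocks (A - A') (B - B') (C - C') (D - D') := by
  ext (i | i) (j | j) <;> rfl

variable [Fintype m] [Fintype n] [DecidableEq m] [DecidableEq n]

section Ring

variable [Ring R] {X : Matrix m n R} {Y : Matrix n m R}

lemma fromBlocks_one_zero_sq_sub_self (hYX : Y * X = 1) :
    fromBlocks 1 X Y 0 ^ 2 - fromBlocks 1 X Y 0 = fromBlocks (X * Y) 0 0 1 := by
  simp [sq, fromBlocks_multiply, fromBlocks_sub, hYX]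

lemma fromBlocks_one_zero_mul_sub_one_mul_sq_sub_sub_one (hYX : Y * X = 1) :
    fromBlocks 1 X Y 0 * (fromBlocks 1 X Y 0 - 1) *
      (fromBlocks 1 X Y 0 ^ 2 - fromBlocks 1 X Y 0 - 1) = 0 := by
  have hXY : IsIdempotentElem (X * Y) := by
    rw [IsIdempotentElem, Matrix.mul_assoc, ← Matrix.mul_assoc Y, hYX, Matrix.one_mul]
  rw [mul_sub_one (fromBlocks 1 X Y 0), ← sq, fromBlocks_one_zero_sq_sub_self hYX,
    ← fromBlocks_one, fromBlocks_sub, fromBlocks_multiply]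
  simp [mul_sub_one, hXY.eq]

end Ring

variable [CommRing R]

lemma inv_fromBlocks_zero_zero (A : Matrix m m R) (D : Matrix n n R) (hAD : IsUnit A ↔ IsUnit D) :
    (fromBlocks A 0 0 D)⁻¹ = fromBlocks A⁻¹ 0 0 D⁻¹ := by
  simp [inv_fromBlocks_zero₂₁_of_isUnit_iff A 0 D hAD]

lemma inv_fromBlocks_diag_mul_fromBlocks_zero₂₂ {A : Matrix m m R} {S : Matrix n n R}
    (hA : IsUnit A) (hS : IsUnit S) (B : Matrix m n R) (C : Matrix n m R) :
    (fromBlocks A 0 0 S)⁻¹ * fromBlocks A B C 0 = fromBlocks 1 (A⁻¹ * B) (S⁻¹ * C) 0 := by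
  rw [inv_fromBlocks_zero_zero A S (iff_of_true hA hS), fromBlocks_multiply]
  simp [nonsing_inv_mul A ((isUnit_iff_isUnit_det A).mp hA)]

end Matrix

theorem stmt_6 (k l : ℕ)
    (A : Matrix (Fin k) (Fin k) ℝ) (hA : IsUnit A)
    (B : Matrix (Fin k) (Fin l) ℝ)
    (S0 : Matrix (Fin l) (Fin l) ℝ) (hS0def : S0 = Bᵀ * A⁻¹ * B) (hS0 : IsUnit S0)
    (calA P1 : Matrix (Fin k ⊕ Fin l) (Fin k ⊕ Fin l) ℝ)
    (hcalA : calA = Matrix.fromBlocks A B Bᵀ 0)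
    (hP1 : P1 = Matrix.fromBlocks A 0 0 S0) :
    IsUnit P1 ∧
      (P1⁻¹ * calA) * (P1⁻¹ * calA - 1) * ((P1⁻¹ * calA) ^ 2 - P1⁻¹ * calA - 1) = 0 := by
  subst hcalA hP1
  refine ⟨isUnit_fromBlocks_zero₂₁.mpr ⟨hA, hS0⟩, ?_⟩
  have hYX : S0⁻¹ * Bᵀ * (A⁻¹ * B) = 1 := by
    rw [Matrix.mul_assoc, ← Matrix.mul_assoc Bᵀ, ← hS0def,
      nonsing_inv_mul S0 ((isUnit_iff_isUnit_det S0).mp hS0)]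
  rw [inv_fromBlocks_diag_mul_fromBlocks_zero₂₂ hA hS0]
  exact fromBlocks_one_zero_mul_sub_one_mul_sq_sub_sub_one hYX
end

section
/- Let $n, m \ge 1$. Let $K, M$ be real $n\times n$ matrices, $\omega \in \mathbb{R}^n$, $N_b$ a real $n\times m$ matrix, $M_b$ a real $m\times m$ matrix, and $\beta, s \in \mathbb{R}$. Define $K_e = \begin{pmatrix} K & \omega \\ \omega^T & 0 \end{pmatrix}$, $M_e = \begin{pmatrix} M & 0 \\ 0 & 0 \end{pmatrix}$ (both $(n+1)\times(n+1)$), $Z_e = \begin{pmatrix} 0 & \omega \\ 0 & 0 \end{pmatrix}$, $N_{be} = \begin{pmatrix} N_b & 0 \\ 0 & 0 \end{pmatrix}$ (both $(n+1)\times(m+1)$), and $M_{be} = \begin{pmatrix} \beta M_b & 0 \\ 0 & s \end{pmatrix}$ ($(m+1)\times(m+1)$). Assume $K_e$ is invertible, $\beta M_b$ is invertible, and $s \ne 0$. Define the Schur complement $S = \begin{pmatrix} M_{be} + Z_e^T K_e^{-1} N_{be} & -N_{be}^T \\ Z_e + M_e K_e^{-1} N_{be} & K_e \end{pmatrix}$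 and its approximation $\widehat{S} = \begin{pmatrix} M_{be} & -N_{be}^T \\ 0 & K_e \end{pmatrix}$, both of size $(n+m+2)\times(n+m+2)$. Suppose $\mu \in \mathbb{R}$ with $\mu \ne 1$ and $x = (x_1, x_2)$ with $x_1 \in \mathbb{R}^{m+1}$, $x_2 \in \mathbb{R}^{n+1}$, $x_2 \ne 0$, satisfy $S x = \mu \widehat{S} x$. Then $\mu = 1 + \dfrac{x_2^T \left(K_e^{-1} M_e K_e^{-1} N_{be} M_{be}^{-1} N_{be}^T\right) x_2}{x_2^T x_2}$. -/
/-!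
Written block row by block row, the first row of `S x = μ Ŝ x` reads
`(1 - μ) (M_be x₁ - N_beᵀ x₂) + Z_eᵀ K_e⁻¹ N_be x₁ = 0`, and the last term vanishes because
`Z_eᵀ = diag(0, 1) K_e`. As `μ ≠ 1` this forces `x₁ = M_be⁻¹ N_beᵀ x₂`. Substituting into the second
block row, the term `Z_e x₁ = Z_e M_be⁻¹ N_beᵀ x₂` vanishes since `M_be⁻¹` is block diagonal, leaving
`K_e⁻¹ M_e K_e⁻¹ N_be M_be⁻¹ N_beᵀ x₂ = (μ - 1) x₂`; the formula is the Rayleigh quotient of this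
eigenvector.
-/

open Matrix

namespace Matrix

variable {R ι κ : Type*}

theorem fromBlocks_mulVec_sumElim [Fintype ι] [Fintype κ] [NonUnitalNonAssocSemiring R]
    (A : Matrix ι ι R) (B : Matrix ι κ R) (C : Matrix κ ι R) (D : Matrix κ κ R)
    (x₁ : ι → R) (x₂ : κ → R) :
    fromBlocks A B C D *ᵥ Sum.elim x₁ x₂ = Sum.elim (A *ᵥ x₁ + B *ᵥ x₂) (C *ᵥ x₁ + D *ᵥ x₂) :=
  fromBlocks_mulVec A B C D _

theorem eq_div_dotProduct_of_mulVec_eq_smul [Fintype κ] [Field R] [LinearOrder R]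
    [IsStrictOrderedRing R] {A : Matrix κ κ R} {x : κ → R} {c : R} (hx : x ≠ 0)
    (h : A *ᵥ x = c • x) :
    c = x ⬝ᵥ A *ᵥ x / (x ⬝ᵥ x) := by
  have hxx : x ⬝ᵥ x ≠ 0 := mt dotProduct_self_eq_zero.mp hx
  rw [h, dotProduct_smul, smul_eq_mul, mul_div_assoc, div_self hxx, mul_one]

theorem mulVec_eq_smul_of_schur_eigen [Fintype ι] [Fintype κ] [DecidableEq ι] [DecidableEq κ]
    [Field R] {A : Matrix ι ι R} {K E : Matrix κ κ R} {Z N : Matrix κ ι R} (hK : IsUnit K)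
    (hA : IsUnit A) (hZKN : Zᵀ * K⁻¹ * N = 0) (hZAN : Z * A⁻¹ * Nᵀ = 0) {μ : R} (hμ : μ ≠ 1)
    {x₁ : ι → R} {x₂ : κ → R}
    (heig : fromBlocks (A + Zᵀ * K⁻¹ * N) (-Nᵀ) (Z + E * K⁻¹ * N) K *ᵥ Sum.elim x₁ x₂ =
      μ • fromBlocks A (-Nᵀ) 0 K *ᵥ Sum.elim x₁ x₂) :
    (K⁻¹ * E * K⁻¹ * N * A⁻¹ * Nᵀ) *ᵥ x₂ = (μ - 1) • x₂ := by
  rw [hZKN, add_zero, fromBlocks_mulVec_sumElim, fromBlocks_mulVec_sumElim] at heig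
  have row₁ : A *ᵥ x₁ - Nᵀ *ᵥ x₂ = μ • (A *ᵥ x₁ - Nᵀ *ᵥ x₂) := funext fun i => by
    simpa [sub_eq_add_neg, neg_mulVec] using congrFun heig (Sum.inl i)
  have row₂ : Z *ᵥ x₁ + (E * K⁻¹ * N) *ᵥ x₁ + K *ᵥ x₂ = μ • K *ᵥ x₂ := funext fun i => by
    simpa [add_mulVec] using congrFun heig (Sum.inr i)
  have hx₁ : x₁ = (A⁻¹ * Nᵀ) *ᵥ x₂ := by
    have : (1 - μ) • (A *ᵥ x₁ - Nᵀ *ᵥ x₂) = 0 := by rw [sub_smul, one_smul, ← row₁, sub_self]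
    rw [smul_eq_zero, or_iff_right (sub_ne_zero.mpr hμ.symm), sub_eq_zero] at this
    rw [← mulVec_mulVec, ← this, mulVec_mulVec,
      nonsing_inv_mul _ ((isUnit_iff_isUnit_det A).mp hA), one_mulVec]
  have hZx₁ : Z *ᵥ x₁ = 0 := by rw [hx₁, mulVec_mulVec, ← Matrix.mul_assoc, hZAN, zero_mulVec]
  have hKx₂ : (E * K⁻¹ * N * A⁻¹ * Nᵀ) *ᵥ x₂ = (μ - 1) • K *ᵥ x₂ := by
    rw [hZx₁, zero_add, hx₁, mulVec_mulVec] at row₂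
    rw [sub_smul, one_smul, ← row₂]
    simp only [Matrix.mul_assoc]
    abel
  calc (K⁻¹ * E * K⁻¹ * N * A⁻¹ * Nᵀ) *ᵥ x₂ = K⁻¹ *ᵥ (E * K⁻¹ * N * A⁻¹ * Nᵀ) *ᵥ x₂ := by
        simp only [mulVec_mulVec, Matrix.mul_assoc]
    _ = (μ - 1) • x₂ := by
        rw [hKx₂, mulVec_smul, mulVec_mulVec,
          nonsing_inv_mul _ ((isUnit_iff_isUnit_det K).mp hK), one_mulVec]

theorem transpose_fromBlocks_replicateCol_mul_inv_mul [Fintype κ] [DecidableEq κ] [Field R]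
    (K : Matrix κ κ R) (ω : κ → R) (N : Matrix κ ι R) :
    (fromBlocks 0 (replicateCol (Fin 1) ω) 0 0 : Matrix (κ ⊕ Fin 1) (ι ⊕ Fin 1) R)ᵀ *
      (fromBlocks K (replicateCol (Fin 1) ω) (replicateRow (Fin 1) ω) 0)⁻¹ *
      (fromBlocks N 0 0 0 : Matrix (κ ⊕ Fin 1) (ι ⊕ Fin 1) R) = 0 := by
  set Ke := fromBlocks K (replicateCol (Fin 1) ω) (replicateRow (Fin 1) ω) 0
  by_cases hK : IsUnit Ke
  · have hZ : (fromBlocks 0 (replicateCol (Fin 1) ω) 0 0 : Matrix (κ ⊕ Fin 1) (ι ⊕ Fin 1) R)ᵀ =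
        (fromBlocks 0 0 0 1 : Matrix (ι ⊕ Fin 1) (κ ⊕ Fin 1) R) * Ke := by
      rw [fromBlocks_multiply, fromBlocks_transpose]
      simp
    rw [hZ, Matrix.mul_assoc _ Ke, mul_nonsing_inv _ ((isUnit_iff_isUnit_det Ke).mp hK),
      Matrix.mul_one, fromBlocks_multiply]
    simp
  · rw [nonsing_inv_eq_ringInverse, Ring.inverse_non_unit _ hK]
    simp

theorem fromBlocks_replicateCol_mul_inv_mul [Fintype ι] [DecidableEq ι] [Field R]
    (B : Matrix ι ι R) (D : Matrix (Fin 1) (Fin 1) R) (ω : κ → R) (N : Matrix κ ι R) :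
    (fromBlocks 0 (replicateCol (Fin 1) ω) 0 0 : Matrix (κ ⊕ Fin 1) (ι ⊕ Fin 1) R) *
      (fromBlocks B 0 0 D)⁻¹ * (fromBlocks N 0 0 0 : Matrix (κ ⊕ Fin 1) (ι ⊕ Fin 1) R)ᵀ = 0 := by
  by_cases hBD : IsUnit B ↔ IsUnit D
  · rw [inv_fromBlocks_zero₁₂_of_isUnit_iff _ _ _ hBD, fromBlocks_transpose]
    simp [fromBlocks_multiply]
  · have : ¬IsUnit (fromBlocks B 0 0 D) := by
      rw [isUnit_fromBlocks_zero₁₂]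
      tauto
    rw [nonsing_inv_eq_ringInverse, Ring.inverse_non_unit _ this]
    simp

end Matrix

theorem stmt_9_general (n m : ℕ)
    (K : Matrix (Fin n) (Fin n) ℝ) (ω : Fin n → ℝ)
    (Nb : Matrix (Fin n) (Fin m) ℝ) (Mb : Matrix (Fin m) (Fin m) ℝ)
    (β s : ℝ)
    (Ke Me : Matrix (Fin n ⊕ Fin 1) (Fin n ⊕ Fin 1) ℝ)
    (hKe : Ke = Matrix.fromBlocks K (Matrix.replicateCol (Fin 1) ω) (Matrix.replicateRow (Fin 1) ω) 0)
    (Ze Nbe : Matrix (Fin n ⊕ Fin 1) (Fin m ⊕ Fin 1) ℝ)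
    (hZe : Ze = Matrix.fromBlocks 0 (Matrix.replicateCol (Fin 1) ω) 0 0)
    (hNbe : Nbe = Matrix.fromBlocks Nb 0 0 0)
    (Mbe : Matrix (Fin m ⊕ Fin 1) (Fin m ⊕ Fin 1) ℝ)
    (hMbe : Mbe = Matrix.fromBlocks (β • Mb) 0 0 (s • (1 : Matrix (Fin 1) (Fin 1) ℝ)))
    (hKeInv : IsUnit Ke) (hMbInv : IsUnit (β • Mb)) (hs : s ≠ 0)
    (S Shat : Matrix ((Fin m ⊕ Fin 1) ⊕ (Fin n ⊕ Fin 1))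
                     ((Fin m ⊕ Fin 1) ⊕ (Fin n ⊕ Fin 1)) ℝ)
    (hS : S = Matrix.fromBlocks (Mbe + Zeᵀ * Ke⁻¹ * Nbe) (-Nbeᵀ)
                (Ze + Me * Ke⁻¹ * Nbe) Ke)
    (hShat : Shat = Matrix.fromBlocks Mbe (-Nbeᵀ) 0 Ke)
    (μ : ℝ) (hμ : μ ≠ 1)
    (x1 : Fin m ⊕ Fin 1 → ℝ) (x2 : Fin n ⊕ Fin 1 → ℝ) (hx2 : x2 ≠ 0)
    (heig : S.mulVec (Sum.elim x1 x2) = μ • Shat.mulVec (Sum.elim x1 x2)) :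
    μ = 1 + (x2 ⬝ᵥ (Ke⁻¹ * Me * Ke⁻¹ * Nbe * Mbe⁻¹ * Nbeᵀ).mulVec x2) / (x2 ⬝ᵥ x2) := by
  subst hS hShat
  have hMbeInv : IsUnit Mbe := by
    rw [hMbe, isUnit_fromBlocks_zero₁₂]
    exact ⟨hMbInv, by simpa [isUnit_iff_isUnit_det] using hs⟩
  have hZKN : Zeᵀ * Ke⁻¹ * Nbe = 0 := by
    rw [hZe, hKe, hNbe]
    exact transpose_fromBlocks_replicateCol_mul_inv_mul K ω Nb
  have hZMN : Ze * Mbe⁻¹ * Nbeᵀ = 0 := by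
    rw [hZe, hMbe, hNbe]
    exact fromBlocks_replicateCol_mul_inv_mul _ _ ω Nb
  exact eq_add_of_sub_eq' <| eq_div_dotProduct_of_mulVec_eq_smul hx2 <|
    mulVec_eq_smul_of_schur_eigen hKeInv hMbeInv hZKN hZMN hμ heig

theorem stmt_9 (n m : ℕ) (hn : 1 ≤ n) (hm : 1 ≤ m)
    (K M : Matrix (Fin n) (Fin n) ℝ) (ω : Fin n → ℝ)
    (Nb : Matrix (Fin n) (Fin m) ℝ) (Mb : Matrix (Fin m) (Fin m) ℝ)
    (β s : ℝ)
    (Ke Me : Matrix (Fin n ⊕ Fin 1) (Fin n ⊕ Fin 1) ℝ)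
    (hKe : Ke = Matrix.fromBlocks K (Matrix.replicateCol (Fin 1) ω) (Matrix.replicateRow (Fin 1) ω) 0)
    (hMe : Me = Matrix.fromBlocks M 0 0 0)
    (Ze Nbe : Matrix (Fin n ⊕ Fin 1) (Fin m ⊕ Fin 1) ℝ)
    (hZe : Ze = Matrix.fromBlocks 0 (Matrix.replicateCol (Fin 1) ω) 0 0)
    (hNbe : Nbe = Matrix.fromBlocks Nb 0 0 0)
    (Mbe : Matrix (Fin m ⊕ Fin 1) (Fin m ⊕ Fin 1) ℝ)
    (hMbe : Mbe = Matrix.fromBlocks (β • Mb) 0 0 (s • (1 : Matrix (Fin 1) (Fin 1) ℝ)))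
    (hKeInv : IsUnit Ke) (hMbInv : IsUnit (β • Mb)) (hs : s ≠ 0)
    (S Shat : Matrix ((Fin m ⊕ Fin 1) ⊕ (Fin n ⊕ Fin 1))
                     ((Fin m ⊕ Fin 1) ⊕ (Fin n ⊕ Fin 1)) ℝ)
    (hS : S = Matrix.fromBlocks (Mbe + Zeᵀ * Ke⁻¹ * Nbe) (-Nbeᵀ)
                (Ze + Me * Ke⁻¹ * Nbe) Ke)
    (hShat : Shat = Matrix.fromBlocks Mbe (-Nbeᵀ) 0 Ke)
    (μ : ℝ) (hμ : μ ≠ 1)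
    (x1 : Fin m ⊕ Fin 1 → ℝ) (x2 : Fin n ⊕ Fin 1 → ℝ) (hx2 : x2 ≠ 0)
    (heig : S.mulVec (Sum.elim x1 x2) = μ • Shat.mulVec (Sum.elim x1 x2)) :
    μ = 1 + (x2 ⬝ᵥ (Ke⁻¹ * Me * Ke⁻¹ * Nbe * Mbe⁻¹ * Nbeᵀ).mulVec x2) / (x2 ⬝ᵥ x2) :=
  stmt_9_general n m K ω Nb Mb β s Ke Me hKe Ze Nbe hZe hNbe Mbe hMbe hKeInv hMbInv hs S Shat hS
    hShat μ hμ x1 x2 hx2 heig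
end

section
/- Let $n, m \ge 1$. Let $K$ be a real symmetric $n\times n$ matrix, $M$ a real symmetric positive semidefinite $n\times n$ matrix, $\omega \in \mathbb{R}^n$, $N_b$ a real $n\times m$ matrix, $M_b$ a real symmetric positive definite $m\times m$ matrix, $\beta > 0$, and $s > 0$. Define $K_e = \begin{pmatrix} K & \omega \\ \omega^T & 0 \end{pmatrix}$, $M_e = \begin{pmatrix} M & 0 \\ 0 & 0 \end{pmatrix}$, $Z_e = \begin{pmatrix} 0 & \omega \\ 0 & 0 \end{pmatrix}$, $N_{be} = \begin{pmatrix} N_b & 0 \\ 0 & 0 \end{pmatrix}$, $M_{be} = \begin{pmatrix} \beta M_b & 0 \\ 0 & s \end{pmatrix}$, and assume $K_e$ is invertible. Define $S = \begin{pmatrix} M_{be} + Z_e^T K_e^{-1} N_{be} & -N_{be}^T \\ Z_e + M_e K_e^{-1} N_{be} & K_e \end{pmatrix}$ and $\widehat{S} = \begin{pmatrix} M_{be} & -N_{be}^T \\ 0 & K_e \end{pmatrix}$. Then every real generalized eigenvalue of the pencil $(S, \widehat{S})$ satisfies $\mu \ge 1$: if $\mu \in \mathbb{R}$ and $x \ne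 0$ satisfy $S x = \mu \widehat{S} x$, then $\mu \ge 1$. -/
/-!
Since `Zeᵀ = (0 1) Ke` is the last block row of `Ke`, we get `Zeᵀ Ke⁻¹ Nbe = (0 1) Nbe = 0`, so
`S` and `Ŝ` share their first block row. For an eigenpair `(μ, (u, v))` with `μ ≠ 1` that row
gives `Mbe u = Nbeᵀ v`, and the second row gives `(Ze + Me Ke⁻¹ Nbe) u = (μ - 1) Ke v`. Testing
the latter against `w = Ke⁻¹ Nbe u` (which kills the `Ze` term, again by `Zeᵀ Ke⁻¹ Nbe = 0`) and
using the symmetry of `Ke` yields `wᵀ Me w = (μ - 1) uᵀ Mbe u`. The left side is nonnegative,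
while `uᵀ Mbe u > 0` unless `u = 0`, in which case `Ke v = 0` forces `v = 0`. Hence `μ ≥ 1`.
-/

open Matrix

section BlockQuadForm

variable {ι κ : Type*} [Fintype ι] [Fintype κ]

theorem Matrix.dotProduct_fromBlocks_diag_mulVec (A : Matrix ι ι ℝ) (D : Matrix κ κ ℝ)
    (x : ι ⊕ κ → ℝ) :
    x ⬝ᵥ fromBlocks A 0 0 D *ᵥ x
      = (x ∘ Sum.inl) ⬝ᵥ A *ᵥ (x ∘ Sum.inl) + (x ∘ Sum.inr) ⬝ᵥ D *ᵥ (x ∘ Sum.inr) := by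
  simp only [fromBlocks_mulVec, zero_mulVec, add_zero, zero_add]
  rw [← sumElim_dotProduct_sumElim, Sum.elim_comp_inl_inr]

theorem Matrix.dotProduct_fromBlocks_diag_mulVec_nonneg {A : Matrix ι ι ℝ}
    (hA : ∀ u, 0 ≤ u ⬝ᵥ A *ᵥ u) (x : ι ⊕ κ → ℝ) :
    0 ≤ x ⬝ᵥ fromBlocks A 0 0 (0 : Matrix κ κ ℝ) *ᵥ x := by
  simpa [dotProduct_fromBlocks_diag_mulVec] using hA (x ∘ Sum.inl)

theorem Matrix.dotProduct_fromBlocks_diag_mulVec_pos {A : Matrix ι ι ℝ} {D : Matrix κ κ ℝ}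
    (hA : ∀ u, u ≠ 0 → 0 < u ⬝ᵥ A *ᵥ u) (hD : ∀ u, u ≠ 0 → 0 < u ⬝ᵥ D *ᵥ u)
    {x : ι ⊕ κ → ℝ} (hx : x ≠ 0) :
    0 < x ⬝ᵥ fromBlocks A 0 0 D *ᵥ x := by
  have hA' (u : ι → ℝ) : 0 ≤ u ⬝ᵥ A *ᵥ u := by
    rcases eq_or_ne u 0 with rfl | hu
    exacts [by simp, (hA u hu).le]
  have hD' (u : κ → ℝ) : 0 ≤ u ⬝ᵥ D *ᵥ u := by
    rcases eq_or_ne u 0 with rfl | hu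
    exacts [by simp, (hD u hu).le]
  rw [dotProduct_fromBlocks_diag_mulVec]
  by_cases hl : x ∘ Sum.inl = 0
  · have hr : x ∘ Sum.inr ≠ 0 := fun hr ↦ hx (by
      rw [← Sum.elim_comp_inl_inr x, hl, hr]; exact Sum.elim_zero_zero)
    exact add_pos_of_nonneg_of_pos (hA' _) (hD _ hr)
  · exact add_pos_of_pos_of_nonneg (hA _ hl) (hD' _)

end BlockQuadForm

section GeneralizedEigenvalue

variable {ι κ : Type*} [Fintype ι] [Fintype κ] [DecidableEq κ]
  {A : Matrix ι ι ℝ} {N Z : Matrix κ ι ℝ} {K M : Matrix κ κ ℝ}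

theorem Matrix.dotProduct_mulVec_inv_mul_mulVec_eq_mul (hK : Kᵀ = K) (hKu : IsUnit K)
    (hZKN : Zᵀ * K⁻¹ * N = 0) {u : ι → ℝ} {v : κ → ℝ} {c : ℝ}
    (htop : A *ᵥ u = Nᵀ *ᵥ v) (hbot : (Z + M * K⁻¹ * N) *ᵥ u = c • K *ᵥ v) :
    ((K⁻¹ * N) *ᵥ u) ⬝ᵥ M *ᵥ ((K⁻¹ * N) *ᵥ u) = c * (u ⬝ᵥ A *ᵥ u) := by
  set w := (K⁻¹ * N) *ᵥ u
  have hZw : w ⬝ᵥ Z *ᵥ u = 0 := by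
    rw [dotProduct_mulVec, ← mulVec_transpose, mulVec_mulVec, ← Matrix.mul_assoc, hZKN,
      zero_mulVec, zero_dotProduct]
  have hKw : K *ᵥ w = N *ᵥ u := by
    rw [mulVec_mulVec, ← Matrix.mul_assoc, mul_nonsing_inv K ((isUnit_iff_isUnit_det K).mp hKu),
      Matrix.one_mul]
  calc w ⬝ᵥ M *ᵥ w = w ⬝ᵥ (Z + M * K⁻¹ * N) *ᵥ u := by
        rw [add_mulVec, dotProduct_add, hZw, zero_add, Matrix.mul_assoc, ← mulVec_mulVec]
    _ = c * (K *ᵥ w ⬝ᵥ v) := by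
        rw [hbot, dotProduct_smul, smul_eq_mul, dotProduct_mulVec, ← mulVec_transpose, hK]
    _ = c * (u ⬝ᵥ A *ᵥ u) := by
        rw [hKw, htop, dotProduct_mulVec u, vecMul_transpose]

theorem Matrix.one_le_of_fromBlocks_mulVec_eq_smul (hA : ∀ u, u ≠ 0 → 0 < u ⬝ᵥ A *ᵥ u)
    (hM : ∀ w, 0 ≤ w ⬝ᵥ M *ᵥ w) (hK : Kᵀ = K) (hKu : IsUnit K) (hZKN : Zᵀ * K⁻¹ * N = 0)
    {μ : ℝ} {x : ι ⊕ κ → ℝ} (hx : x ≠ 0)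
    (heq : fromBlocks A (-Nᵀ) (Z + M * K⁻¹ * N) K *ᵥ x = μ • fromBlocks A (-Nᵀ) 0 K *ᵥ x) :
    1 ≤ μ := by
  by_contra! hμ
  rw [fromBlocks_mulVec, fromBlocks_mulVec] at heq
  set u := x ∘ Sum.inl
  set v := x ∘ Sum.inr
  have htop : A *ᵥ u = Nᵀ *ᵥ v := by
    have hfix : A *ᵥ u - Nᵀ *ᵥ v = μ • (A *ᵥ u - Nᵀ *ᵥ v) := by
      funext i
      simpa [neg_mulVec, sub_eq_add_neg] using congrFun heq (Sum.inl i)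
    have : (1 - μ) • (A *ᵥ u - Nᵀ *ᵥ v) = 0 := by rw [sub_smul, one_smul, ← hfix, sub_self]
    exact sub_eq_zero.mp ((smul_eq_zero.mp this).resolve_left (by linarith))
  have hbot : (Z + M * K⁻¹ * N) *ᵥ u = (μ - 1) • K *ᵥ v := by
    funext i
    have := congrFun heq (Sum.inr i)
    simp only [Sum.elim_inr, Pi.add_apply, Pi.smul_apply, zero_mulVec, zero_add,
      smul_eq_mul] at this ⊢
    linarith
  have hu : u ≠ 0 := by
    intro hu0
    have hKv : K *ᵥ v = 0 := by
      rw [hu0, mulVec_zero] at hbot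
      exact (smul_eq_zero.mp hbot.symm).resolve_left (by linarith)
    have hv0 : v = 0 := mulVec_injective_iff_isUnit.mpr hKu (hKv.trans (mulVec_zero K).symm)
    refine hx (funext fun i ↦ ?_)
    cases i with
    | inl i => exact congrFun hu0 i
    | inr i => exact congrFun hv0 i
  have hquad := dotProduct_mulVec_inv_mul_mulVec_eq_mul hK hKu hZKN htop hbot
  nlinarith [hM ((K⁻¹ * N) *ᵥ u), hA u hu]

end GeneralizedEigenvalue

theorem Matrix.transpose_fromBlocks_replicateCol_replicateRow {κ ο : Type*} {K : Matrix κ κ ℝ}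
    (hK : Kᵀ = K) (ω : κ → ℝ) :
    (fromBlocks K (replicateCol ο ω) (replicateRow ο ω) 0)ᵀ
      = fromBlocks K (replicateCol ο ω) (replicateRow ο ω) 0 := by
  simp [fromBlocks_transpose, hK]

theorem Matrix.transpose_mul_inv_mul_fromBlocks_eq_zero {κ ι ο : Type*} [Fintype κ] [Fintype ο]
    [DecidableEq κ] [DecidableEq ο] (K : Matrix κ κ ℝ) (ω : κ → ℝ) (Nb : Matrix κ ι ℝ)
    (hKe : IsUnit (fromBlocks K (replicateCol ο ω) (replicateRow ο ω) (0 : Matrix ο ο ℝ))) :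
    (fromBlocks (0 : Matrix κ ι ℝ) (replicateCol ο ω) 0 (0 : Matrix ο ο ℝ))ᵀ
        * (fromBlocks K (replicateCol ο ω) (replicateRow ο ω) 0)⁻¹
        * fromBlocks Nb 0 0 (0 : Matrix ο ο ℝ) = 0 := by
  set Ke := fromBlocks K (replicateCol ο ω) (replicateRow ο ω) (0 : Matrix ο ο ℝ)
  have hZ : (fromBlocks (0 : Matrix κ ι ℝ) (replicateCol ο ω) 0 (0 : Matrix ο ο ℝ))ᵀ
      = fromBlocks (0 : Matrix ι κ ℝ) 0 0 (1 : Matrix ο ο ℝ) * Ke := by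
    simp [Ke, fromBlocks_transpose, fromBlocks_multiply]
  rw [hZ, Matrix.mul_assoc _ Ke Ke⁻¹, mul_nonsing_inv Ke ((isUnit_iff_isUnit_det Ke).mp hKe),
    Matrix.mul_one]
  simp [fromBlocks_multiply]

theorem stmt_10_general (n m : ℕ)
    (K M : Matrix (Fin n) (Fin n) ℝ) (hKsymm : Kᵀ = K)
    (hMpsd : ∀ x : Fin n → ℝ, 0 ≤ x ⬝ᵥ M.mulVec x)
    (ω : Fin n → ℝ)
    (Nb : Matrix (Fin n) (Fin m) ℝ) (Mb : Matrix (Fin m) (Fin m) ℝ)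
    (hMbpd : ∀ x : Fin m → ℝ, x ≠ 0 → 0 < x ⬝ᵥ Mb.mulVec x)
    (β s : ℝ) (hβ : 0 < β) (hs : 0 < s)
    (Ke Me : Matrix (Fin n ⊕ Fin 1) (Fin n ⊕ Fin 1) ℝ)
    (hKe : Ke = Matrix.fromBlocks K (Matrix.replicateCol (Fin 1) ω) (Matrix.replicateRow (Fin 1) ω) 0)
    (hMe : Me = Matrix.fromBlocks M 0 0 0)
    (Ze Nbe : Matrix (Fin n ⊕ Fin 1) (Fin m ⊕ Fin 1) ℝ)
    (hZe : Ze = Matrix.fromBlocks 0 (Matrix.replicateCol (Fin 1) ω) 0 0)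
    (hNbe : Nbe = Matrix.fromBlocks Nb 0 0 0)
    (Mbe : Matrix (Fin m ⊕ Fin 1) (Fin m ⊕ Fin 1) ℝ)
    (hMbe : Mbe = Matrix.fromBlocks (β • Mb) 0 0 (s • (1 : Matrix (Fin 1) (Fin 1) ℝ)))
    (hKeInv : IsUnit Ke)
    (S Shat : Matrix ((Fin m ⊕ Fin 1) ⊕ (Fin n ⊕ Fin 1))
                     ((Fin m ⊕ Fin 1) ⊕ (Fin n ⊕ Fin 1)) ℝ)
    (hS : S = Matrix.fromBlocks (Mbe + Zeᵀ * Ke⁻¹ * Nbe) (-Nbeᵀ)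
                (Ze + Me * Ke⁻¹ * Nbe) Ke)
    (hShat : Shat = Matrix.fromBlocks Mbe (-Nbeᵀ) 0 Ke) :
    ∀ (μ : ℝ) (x : (Fin m ⊕ Fin 1) ⊕ (Fin n ⊕ Fin 1) → ℝ), x ≠ 0 →
      S.mulVec x = μ • Shat.mulVec x → 1 ≤ μ := by
  intro μ x hx heq
  have hKeT : Keᵀ = Ke := hKe ▸ transpose_fromBlocks_replicateCol_replicateRow hKsymm ω
  have hZKN : Zeᵀ * Ke⁻¹ * Nbe = 0 := by
    subst hZe hKe hNbe
    exact transpose_mul_inv_mul_fromBlocks_eq_zero K ω Nb hKeInv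
  have hMbePos : ∀ u, u ≠ 0 → 0 < u ⬝ᵥ Mbe *ᵥ u := by
    subst hMbe
    refine fun u hu ↦ dotProduct_fromBlocks_diag_mulVec_pos (fun u hu ↦ ?_) (fun u hu ↦ ?_) hu
    · simpa [smul_mulVec, dotProduct_smul] using mul_pos hβ (hMbpd u hu)
    · simpa [smul_mulVec, dotProduct_smul] using mul_pos hs (dotProduct_self_star_pos_iff.mpr hu)
  have hMeNonneg : ∀ w, 0 ≤ w ⬝ᵥ Me *ᵥ w := hMe ▸ dotProduct_fromBlocks_diag_mulVec_nonneg hMpsd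
  rw [hS, hShat, hZKN, add_zero] at heq
  exact one_le_of_fromBlocks_mulVec_eq_smul hMbePos hMeNonneg hKeT hKeInv hZKN hx heq

theorem stmt_10 (n m : ℕ) (hn : 1 ≤ n) (hm : 1 ≤ m)
    (K M : Matrix (Fin n) (Fin n) ℝ) (hKsymm : Kᵀ = K)
    (hMsymm : Mᵀ = M) (hMpsd : ∀ x : Fin n → ℝ, 0 ≤ x ⬝ᵥ M.mulVec x)
    (ω : Fin n → ℝ)
    (Nb : Matrix (Fin n) (Fin m) ℝ) (Mb : Matrix (Fin m) (Fin m) ℝ)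
    (hMbsymm : Mbᵀ = Mb)
    (hMbpd : ∀ x : Fin m → ℝ, x ≠ 0 → 0 < x ⬝ᵥ Mb.mulVec x)
    (β s : ℝ) (hβ : 0 < β) (hs : 0 < s)
    (Ke Me : Matrix (Fin n ⊕ Fin 1) (Fin n ⊕ Fin 1) ℝ)
    (hKe : Ke = Matrix.fromBlocks K (Matrix.replicateCol (Fin 1) ω) (Matrix.replicateRow (Fin 1) ω) 0)
    (hMe : Me = Matrix.fromBlocks M 0 0 0)
    (Ze Nbe : Matrix (Fin n ⊕ Fin 1) (Fin m ⊕ Fin 1) ℝ)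
    (hZe : Ze = Matrix.fromBlocks 0 (Matrix.replicateCol (Fin 1) ω) 0 0)
    (hNbe : Nbe = Matrix.fromBlocks Nb 0 0 0)
    (Mbe : Matrix (Fin m ⊕ Fin 1) (Fin m ⊕ Fin 1) ℝ)
    (hMbe : Mbe = Matrix.fromBlocks (β • Mb) 0 0 (s • (1 : Matrix (Fin 1) (Fin 1) ℝ)))
    (hKeInv : IsUnit Ke)
    (S Shat : Matrix ((Fin m ⊕ Fin 1) ⊕ (Fin n ⊕ Fin 1))
                     ((Fin m ⊕ Fin 1) ⊕ (Fin n ⊕ Fin 1)) ℝ)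
    (hS : S = Matrix.fromBlocks (Mbe + Zeᵀ * Ke⁻¹ * Nbe) (-Nbeᵀ)
                (Ze + Me * Ke⁻¹ * Nbe) Ke)
    (hShat : Shat = Matrix.fromBlocks Mbe (-Nbeᵀ) 0 Ke) :
    ∀ (μ : ℝ) (x : (Fin m ⊕ Fin 1) ⊕ (Fin n ⊕ Fin 1) → ℝ), x ≠ 0 →
      S.mulVec x = μ • Shat.mulVec x → 1 ≤ μ :=
  stmt_10_general n m K M hKsymm hMpsd ω Nb Mb hMbpd β s hβ hs Ke Me hKe hMe Ze Nbe hZe hNbe Mbe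
    hMbe hKeInv S Shat hS hShat
end

section
/- Let $n, m \ge 1$. Let $K, M$ be real $n\times n$ matrices, $\omega \in \mathbb{R}^n$, $N_b$ a real $n\times m$ matrix, $M_b$ a real $m\times m$ matrix, and $\beta, s \in \mathbb{R}$. Define $K_e = \begin{pmatrix} K & \omega \\ \omega^T & 0 \end{pmatrix}$, $M_e = \begin{pmatrix} M & 0 \\ 0 & 0 \end{pmatrix}$, $Z_e = \begin{pmatrix} 0 & \omega \\ 0 & 0 \end{pmatrix}$, $N_{be} = \begin{pmatrix} N_b & 0 \\ 0 & 0 \end{pmatrix}$, $M_{be} = \begin{pmatrix} \beta M_b & 0 \\ 0 & s \end{pmatrix}$, and assume $K_e$ is invertible, $\beta M_b$ is invertible, and $s \ne 0$. Consider the $(2n+m+3)\times(2n+m+3)$ permuted extended saddle point matrix $\mathcal{A} = \begin{pmatrix} K_e & -N_{be} & 0 \\ Z_e^T & M_{be} & -N_{be}^T \\ M_e & Z_e & K_e \end{pmatrix}$ and the block triangular preconditioner $\widehat{\mathcal{P}}_2 = \begin{pmatrix} K_e & -N_{be} & 0 \\ 0 & M_{be} & -N_{be}^T \\ 0 & 0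 & K_e \end{pmatrix}$. Then $\widehat{\mathcal{P}}_2$ is invertible and $(X-1)^{2n+2}$ divides the characteristic polynomial of the preconditioned matrix $\widehat{\mathcal{P}}_2^{-1}\mathcal{A}$; that is, $1$ is an eigenvalue of $\widehat{\mathcal{P}}_2^{-1}\mathcal{A}$ with algebraic multiplicity at least $2n+2$. -/
/-!
Write `P` for the block upper triangular preconditioner and `A` for the saddle point matrix; they
differ only strictly below the block diagonal. Since `P` is invertible,
`det P · charpoly (P⁻¹ A) = det (X P - A)`, and `X P - A = (X - 1) P + (P - A)` has its first block
row and its last block column divisible by `X - 1`, the block where they cross being zero. Pulling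
these factors out with diagonal matrices gives `(X - 1) ^ (2 (n + 1)) ∣ det (X P - A)`.
-/

open Matrix Polynomial

namespace Matrix

variable {l m n R : Type*} [Fintype l] [Fintype m] [Fintype n]
  [DecidableEq l] [DecidableEq m] [DecidableEq n] [CommRing R]

theorem C_det_mul_charpoly_nonsing_inv_mul (P Q : Matrix n n R) (hP : IsUnit P.det) :
    C P.det * (P⁻¹ * Q).charpoly = ((X : R[X]) • P.map C - Q.map C).det := by
  have hPQ : P * (P⁻¹ * Q) = Q := by rw [← mul_assoc, mul_nonsing_inv P hP, one_mul]
  have hchar : P.map C * charmatrix (P⁻¹ * Q) = (X : R[X]) • P.map C - Q.map C := by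
    rw [charmatrix, RingHom.mapMatrix_apply, mul_sub, ← Matrix.map_mul, hPQ, scalar_apply,
      ← smul_eq_mul_diagonal]
  rw [charpoly, ← hchar, det_mul, ← RingHom.mapMatrix_apply, ← RingHom.map_det]

theorem pow_card_add_card_dvd_det_fromBlocks (t : R) (A : Matrix l l R) (B : Matrix l m R)
    (G : Matrix m l R) (D : Matrix m m R) (E : Matrix m n R)
    (H : Matrix n l R) (J : Matrix n m R) (F : Matrix n n R) :
    t ^ (Fintype.card l + Fintype.card n) ∣
      (fromBlocks (t • A) (fromCols (t • B) 0) (fromRows G H)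
        (fromBlocks (t • D) (t • E) J (t • F))).det := by
  have hfactor : fromBlocks (t • A) (fromCols (t • B) 0) (fromRows G H)
      (fromBlocks (t • D) (t • E) J (t • F)) =
      diagonal (Sum.elim (fun _ => t) 1) *
        fromBlocks A (fromCols B 0) (fromRows G H) (fromBlocks (t • D) E J F) *
        diagonal (Sum.elim 1 (Sum.elim 1 fun _ => t)) := by
    ext (i | i | i) (j | j | j) <;> simp [mul_comm]
  rw [hfactor, det_mul, det_mul, det_diagonal, det_diagonal]
  simp only [Fintype.prod_sum_type, Sum.elim_inl, Sum.elim_inr, Pi.one_apply,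
    Finset.prod_const, Finset.card_univ, one_pow, one_mul, mul_one]
  rw [pow_add, mul_right_comm]
  exact dvd_mul_right _ _

theorem X_sub_one_pow_dvd_charpoly_nonsing_inv_mul_fromBlocks
    (A : Matrix l l R) (B : Matrix l m R)
    (G : Matrix m l R) (D : Matrix m m R) (E : Matrix m n R)
    (H : Matrix n l R) (J : Matrix n m R) (F : Matrix n n R)
    (hP : IsUnit (fromBlocks A (fromCols B 0) 0 (fromBlocks D E 0 F)).det) :
    (X - 1) ^ (Fintype.card l + Fintype.card n) ∣
      ((fromBlocks A (fromCols B 0) 0 (fromBlocks D E 0 F))⁻¹ *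
        fromBlocks A (fromCols B 0) (fromRows G H) (fromBlocks D E J F)).charpoly := by
  rw [← (isUnit_C.mpr hP).dvd_mul_left, C_det_mul_charpoly_nonsing_inv_mul _ _ hP]
  convert pow_card_add_card_dvd_det_fromBlocks (X - 1) (A.map C) (B.map C) (-G.map C)
    (D.map C) (E.map C) (-H.map C) (-J.map C) (F.map C) using 2
  ext (i | i | i) (j | j | j) <;> simp [sub_mul]

end Matrix

theorem stmt_13_general (n m : ℕ)
    (Mb : Matrix (Fin m) (Fin m) ℝ)
    (β s : ℝ)
    (Ke Me : Matrix (Fin n ⊕ Fin 1) (Fin n ⊕ Fin 1) ℝ)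
    (Ze Nbe : Matrix (Fin n ⊕ Fin 1) (Fin m ⊕ Fin 1) ℝ)
    (Mbe : Matrix (Fin m ⊕ Fin 1) (Fin m ⊕ Fin 1) ℝ)
    (hMbe : Mbe = Matrix.fromBlocks (β • Mb) 0 0 (s • (1 : Matrix (Fin 1) (Fin 1) ℝ)))
    (hKeInv : IsUnit Ke) (hMbInv : IsUnit (β • Mb)) (hs : s ≠ 0)
    (calA P2 : Matrix ((Fin n ⊕ Fin 1) ⊕ ((Fin m ⊕ Fin 1) ⊕ (Fin n ⊕ Fin 1)))
                      ((Fin n ⊕ Fin 1) ⊕ ((Fin m ⊕ Fin 1) ⊕ (Fin n ⊕ Fin 1))) ℝ)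
    (hcalA : calA = Matrix.fromBlocks
      Ke (Matrix.fromCols (-Nbe) 0)
      (Matrix.fromRows Zeᵀ Me) (Matrix.fromBlocks Mbe (-Nbeᵀ) Ze Ke))
    (hP2 : P2 = Matrix.fromBlocks
      Ke (Matrix.fromCols (-Nbe) 0)
      0 (Matrix.fromBlocks Mbe (-Nbeᵀ) 0 Ke)) :
    IsUnit P2 ∧ (X - 1) ^ (2 * n + 2) ∣ (P2⁻¹ * calA).charpoly := by
  have hKe : IsUnit Ke.det := (isUnit_iff_isUnit_det Ke).mp hKeInv
  have hMbe_det : IsUnit Mbe.det := by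
    rw [hMbe, det_fromBlocks_zero₂₁]
    exact ((isUnit_iff_isUnit_det _).mp hMbInv).mul (by simpa using hs.isUnit)
  have hP2_det : IsUnit P2.det := by
    rw [hP2, det_fromBlocks_zero₂₁, det_fromBlocks_zero₂₁]
    exact hKe.mul (hMbe_det.mul hKe)
  refine ⟨(isUnit_iff_isUnit_det P2).mpr hP2_det, ?_⟩
  subst hP2 hcalA
  convert X_sub_one_pow_dvd_charpoly_nonsing_inv_mul_fromBlocks _ _ _ _ _ _ _ _ hP2_det using 2
  simp only [Fintype.card_sum, Fintype.card_fin]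
  ring

theorem stmt_13 (n m : ℕ) (hn : 1 ≤ n) (hm : 1 ≤ m)
    (K M : Matrix (Fin n) (Fin n) ℝ) (ω : Fin n → ℝ)
    (Nb : Matrix (Fin n) (Fin m) ℝ) (Mb : Matrix (Fin m) (Fin m) ℝ)
    (β s : ℝ)
    (Ke Me : Matrix (Fin n ⊕ Fin 1) (Fin n ⊕ Fin 1) ℝ)
    (hKe : Ke = Matrix.fromBlocks K (Matrix.replicateCol (Fin 1) ω) (Matrix.replicateRow (Fin 1) ω) 0)
    (hMe : Me = Matrix.fromBlocks M 0 0 0)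
    (Ze Nbe : Matrix (Fin n ⊕ Fin 1) (Fin m ⊕ Fin 1) ℝ)
    (hZe : Ze = Matrix.fromBlocks 0 (Matrix.replicateCol (Fin 1) ω) 0 0)
    (hNbe : Nbe = Matrix.fromBlocks Nb 0 0 0)
    (Mbe : Matrix (Fin m ⊕ Fin 1) (Fin m ⊕ Fin 1) ℝ)
    (hMbe : Mbe = Matrix.fromBlocks (β • Mb) 0 0 (s • (1 : Matrix (Fin 1) (Fin 1) ℝ)))
    (hKeInv : IsUnit Ke) (hMbInv : IsUnit (β • Mb)) (hs : s ≠ 0)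
    (calA P2 : Matrix ((Fin n ⊕ Fin 1) ⊕ ((Fin m ⊕ Fin 1) ⊕ (Fin n ⊕ Fin 1)))
                      ((Fin n ⊕ Fin 1) ⊕ ((Fin m ⊕ Fin 1) ⊕ (Fin n ⊕ Fin 1))) ℝ)
    (hcalA : calA = Matrix.fromBlocks
      Ke (Matrix.fromCols (-Nbe) 0)
      (Matrix.fromRows Zeᵀ Me) (Matrix.fromBlocks Mbe (-Nbeᵀ) Ze Ke))
    (hP2 : P2 = Matrix.fromBlocks
      Ke (Matrix.fromCols (-Nbe) 0)
      0 (Matrix.fromBlocks Mbe (-Nbeᵀ) 0 Ke)) :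
    IsUnit P2 ∧ (X - 1) ^ (2 * n + 2) ∣ (P2⁻¹ * calA).charpoly :=
  stmt_13_general n m Mb β s Ke Me Ze Nbe Mbe hMbe hKeInv hMbInv hs calA P2 hcalA hP2
end
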